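/- Let K be a function assigning a natural number to every triple of partitions such that: (i) K is invariant under conjugating any two of its three arguments, i.e. K(λ,μ,ν) = K(λ',μ',ν) = K(λ',μ,ν') = K(λ,μ',ν') for all partitions λ, μ, ν of the same weight; and (ii) K(λ,μ,ν) ≤ K(λ⊕(1,1), μ⊕(1,1), ν⊕(1,1)) for all partitions λ, μ, ν of the same weight. Let λ, μ, ν be nonempty partitions of the same weight, let d₁, d₂, d₃, d be integers, and suppose that for every (a,b,c,m) ∈ Dom(d₁,d₂,d₃,d), writing A = λ⊕(m−a,a), B = μ⊕(m−b,b), C = ν⊕(m−c,c), each of the four triples (A,B,C), (A',B',C), (A',B,C'), (A,B',C') is K-stable, meaning K(T₁,T₂,T₃) = K(T₁⊕(1,0), T₂⊕(1,0), T₃⊕(1,0)). Then the function (a,b,c,m) ↦ K(λ⊕(m−a,a), μ⊕(m−b,b), ν⊕(m−c,c)) is constant on Dom(d₁,d₂,d₃,d). -/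

import Mathlib

/-- A list of naturals is a partition if it is weakly decreasing and all parts are positive. -/
def IsPartition (l : List ℕ) : Prop :=
  l.Pairwise (· ≥ ·) ∧ ∀ x ∈ l, 0 < x

/-- `opPQ l p q` is the partition `l ⊕ (p, q)`: add `p` to the first part and
append `q` parts equal to `1`. -/
def opPQ (l : List ℕ) (p q : ℕ) : List ℕ :=
  (l.headD 0 + p) :: (l.tail ++ List.replicate q 1)

/-- The conjugate (transpose) partition: its `i`-th part (for `0 ≤ i < max part`)
is the number of parts of `l` that are greater than `i`. -/
def conjP (l : List ℕ) : List ℕ :=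
  (List.range (l.foldr max 0)).map (fun i => (l.filter (fun x => decide (i < x))).length)

/-- `Dom d₁ d₂ d₃ d` is the set of quadruples `(a,b,c,m)` of natural numbers with
`-a + b + c ≥ d₁`, `a - b + c ≥ d₂`, `a + b - c ≥ d₃`, `2m - (a + b + c) ≥ 2d`
(read in `ℤ`), and `m ≥ a`, `m ≥ b`, `m ≥ c`. -/
def Dom (d₁ d₂ d₃ d : ℤ) : Set (ℕ × ℕ × ℕ × ℕ) :=
  {x | d₁ ≤ -(x.1 : ℤ) + x.2.1 + x.2.2.1 ∧
       d₂ ≤ (x.1 : ℤ) - x.2.1 + x.2.2.1 ∧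
       d₃ ≤ (x.1 : ℤ) + x.2.1 - x.2.2.1 ∧
       2 * d ≤ 2 * (x.2.2.2 : ℤ) - ((x.1 : ℤ) + x.2.1 + x.2.2.1) ∧
       x.1 ≤ x.2.2.2 ∧ x.2.1 ≤ x.2.2.2 ∧ x.2.2.1 ≤ x.2.2.2}

/-- A triple `(T₁, T₂, T₃)` is `K`-stable if `K` does not change when one adds one box to
the first row of each of the three partitions. -/
def KStable (K : List ℕ → List ℕ → List ℕ → ℕ) (T₁ T₂ T₃ : List ℕ) : Prop :=
  K T₁ T₂ T₃ = K (opPQ T₁ 1 0) (opPQ T₂ 1 0) (opPQ T₃ 1 0)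

/-!
Write `F(a,b,c,m) = K(λ⊕(m-a,a), μ⊕(m-b,b), ν⊕(m-c,c))`. Stability of `(A,B,C)` says
`F(a,b,c,m+1) = F(a,b,c,m)`. Adding a box to the first row of a conjugate is adding a box to
the first column of the partition, so conjugating two arguments, using stability, and
conjugating back shows that `F` is also invariant under the moves `(1,1,0,1)`, `(1,0,1,1)`,
`(0,1,1,1)`. These four moves preserve `Dom`, and any two points of `Dom` whose values of
`a+b+c` have the same parity reach a common point `(N,N,N,2N)`. The move `(1,1,1,2)` changes
that parity and does not decrease `F` by Conjecture 5.10, which gives both inequalities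
between the two parity classes.
-/

lemma opPQ_opPQ (l : List ℕ) (p q r s : ℕ) :
    opPQ (opPQ l p q) r s = opPQ l (p + r) (q + s) := by
  simp only [opPQ, List.headD_cons, List.tail_cons, List.append_assoc, List.replicate_add,
    add_assoc]

lemma sum_opPQ (l : List ℕ) (p q : ℕ) : (opPQ l p q).sum = l.sum + p + q := by
  cases l <;>
    simp only [opPQ, List.headD_nil, List.headD_cons, List.tail_nil, List.tail_cons,
      List.sum_nil, List.sum_cons, List.sum_append, List.sum_replicate, smul_eq_mul, mul_one] <;>
    omega

lemma IsPartition.headD_pos {l : List ℕ} (hl : IsPartition l) (hne : l ≠ []) : 0 < l.headD 0 := by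
  obtain ⟨h, t, rfl⟩ := List.exists_cons_of_ne_nil hne
  exact hl.2 h List.mem_cons_self

lemma isPartition_opPQ {l : List ℕ} (hl : IsPartition l) (hne : l ≠ []) (p q : ℕ) :
    IsPartition (opPQ l p q) := by
  obtain ⟨h, t, rfl⟩ := List.exists_cons_of_ne_nil hne
  obtain ⟨hs, hpos⟩ := hl
  rw [List.pairwise_cons] at hs
  have hh : 0 < h := hpos h List.mem_cons_self
  have ht : ∀ x ∈ t, 0 < x := fun x hx => hpos x (List.mem_cons_of_mem _ hx)
  simp only [opPQ, List.headD_cons, List.tail_cons]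
  refine ⟨List.pairwise_cons.2 ⟨?_, List.pairwise_append.2 ⟨hs.2, ?_, ?_⟩⟩, ?_⟩
  · intro x hx
    rcases List.mem_append.1 hx with hx | hx
    · exact (hs.1 x hx).trans (Nat.le_add_right h p)
    · rw [List.eq_of_mem_replicate hx]; omega
  · exact List.pairwise_replicate.2 (Or.inr le_rfl)
  · intro x hx y hy
    rw [List.eq_of_mem_replicate hy]
    exact ht x hx
  · intro x hx
    simp only [List.mem_cons, List.mem_append] at hx
    rcases hx with rfl | hx | hx
    · omega
    · exact ht x hx
    · rw [List.eq_of_mem_replicate hx]; exact Nat.one_pos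

lemma foldr_max_append_one {u : List ℕ} (hu : 0 < u.foldr max 0) :
    (u ++ [1]).foldr max 0 = u.foldr max 0 := by
  suffices h : ∀ v : List ℕ, v.foldr max 1 = max 1 (v.foldr max 0) by
    rw [List.foldr_append, List.foldr_cons, List.foldr_nil, Nat.max_zero, h]; omega
  intro v
  induction v with
  | nil => rfl
  | cons x t ih => simp only [List.foldr_cons, ih]; omega

lemma conjP_append_one {u : List ℕ} (hu : 0 < u.foldr max 0) :
    conjP (u ++ [1]) = opPQ (conjP u) 1 0 := by
  obtain ⟨M, hM⟩ := Nat.exists_eq_add_one_of_ne_zero hu.ne'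
  rw [conjP, conjP, foldr_max_append_one hu, hM, List.range_succ_eq_map, List.map_cons,
    List.map_cons, opPQ, List.headD_cons, List.tail_cons, List.replicate_zero, List.append_nil,
    List.map_map, List.map_map]
  congr 1
  · simp [List.filter_append]
  · refine List.map_congr_left fun i _ => ?_
    simp [List.filter_append]

lemma conjP_opPQ_succ {l : List ℕ} {p : ℕ} (h : 0 < l.headD 0 + p) (q : ℕ) :
    conjP (opPQ l p (q + 1)) = opPQ (conjP (opPQ l p q)) 1 0 := by
  have hmax : 0 < (opPQ l p q).foldr max 0 := lt_max_of_lt_left h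
  rw [← conjP_append_one hmax]
  simp [opPQ, List.replicate_succ']

lemma sum_opPQ_sub (l : List ℕ) {a k : ℕ} (ha : a ≤ k) : (opPQ l (k - a) a).sum = l.sum + k := by
  rw [sum_opPQ]; omega

def hookK (K : List ℕ → List ℕ → List ℕ → ℕ) (l m n : List ℕ) (x : ℕ × ℕ × ℕ × ℕ) : ℕ :=
  K (opPQ l (x.2.2.2 - x.1) x.1) (opPQ m (x.2.2.2 - x.2.1) x.2.1)
    (opPQ n (x.2.2.2 - x.2.2.1) x.2.2.1)

section hookK

variable {K : List ℕ → List ℕ → List ℕ → ℕ} {l m n : List ℕ} {a b c k : ℕ}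

lemma hookK_succ (ha : a ≤ k) (hb : b ≤ k) (hc : c ≤ k)
    (hst : KStable K (opPQ l (k - a) a) (opPQ m (k - b) b) (opPQ n (k - c) c)) :
    hookK K l m n (a, b, c, k + 1) = hookK K l m n (a, b, c, k) := by
  simp only [hookK]
  rw [hst]
  simp only [opPQ_opPQ, add_zero, Nat.sub_add_comm ha, Nat.sub_add_comm hb, Nat.sub_add_comm hc]

lemma hookK_conj_succ
    (hK : ∀ X Y Z, IsPartition X → IsPartition Y → IsPartition Z → X.sum = Y.sum →
      Y.sum = Z.sum → K X Y Z = K (conjP X) (conjP Y) Z)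
    (hl : IsPartition l) (hm : IsPartition m) (hn : IsPartition n)
    (hlne : l ≠ []) (hmne : m ≠ []) (hnne : n ≠ []) (hw₁ : l.sum = m.sum) (hw₂ : m.sum = n.sum)
    (ha : a ≤ k) (hb : b ≤ k) (hc : c ≤ k)
    (hst : KStable K (conjP (opPQ l (k - a) a)) (conjP (opPQ m (k - b) b)) (opPQ n (k - c) c)) :
    hookK K l m n (a + 1, b + 1, c, k + 1) = hookK K l m n (a, b, c, k) := by
  have hK' : ∀ a b c k, a ≤ k → b ≤ k → c ≤ k → hookK K l m n (a, b, c, k) =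
      K (conjP (opPQ l (k - a) a)) (conjP (opPQ m (k - b) b)) (opPQ n (k - c) c) :=
    fun a b c k ha hb hc => hK _ _ _ (isPartition_opPQ hl hlne _ _)
      (isPartition_opPQ hm hmne _ _) (isPartition_opPQ hn hnne _ _)
      (by rw [sum_opPQ_sub l ha, sum_opPQ_sub m hb, hw₁])
      (by rw [sum_opPQ_sub m hb, sum_opPQ_sub n hc, hw₂])
  have hl₀ : 0 < l.headD 0 + (k - a) := Nat.add_pos_left (hl.headD_pos hlne) _
  have hm₀ : 0 < m.headD 0 + (k - b) := Nat.add_pos_left (hm.headD_pos hmne) _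
  rw [hK' _ _ _ _ (by omega) (by omega) (by omega), hK' _ _ _ _ ha hb hc, hst,
    Nat.add_sub_add_right, Nat.add_sub_add_right, conjP_opPQ_succ hl₀, conjP_opPQ_succ hm₀,
    opPQ_opPQ, add_zero, Nat.sub_add_comm hc]

lemma hookK_le_hookK_box
    (hK : ∀ X Y Z, IsPartition X → IsPartition Y → IsPartition Z → X.sum = Y.sum →
      Y.sum = Z.sum → K X Y Z ≤ K (opPQ X 1 1) (opPQ Y 1 1) (opPQ Z 1 1))
    (hl : IsPartition l) (hm : IsPartition m) (hn : IsPartition n)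
    (hlne : l ≠ []) (hmne : m ≠ []) (hnne : n ≠ []) (hw₁ : l.sum = m.sum) (hw₂ : m.sum = n.sum)
    (ha : a ≤ k) (hb : b ≤ k) (hc : c ≤ k) :
    hookK K l m n (a, b, c, k) ≤ hookK K l m n (a + 1, b + 1, c + 1, k + 2) := by
  have := hK _ _ _ (isPartition_opPQ hl hlne (k - a) a) (isPartition_opPQ hm hmne (k - b) b)
    (isPartition_opPQ hn hnne (k - c) c) (by rw [sum_opPQ_sub l ha, sum_opPQ_sub m hb, hw₁])
    (by rw [sum_opPQ_sub m hb, sum_opPQ_sub n hc, hw₂])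
  have hsub : ∀ {j}, j ≤ k → k + 2 - (j + 1) = k - j + 1 := by omega
  simpa only [hookK, opPQ_opPQ, hsub ha, hsub hb, hsub hc] using this

end hookK

lemma add_mem_Dom {d₁ d₂ d₃ d : ℤ} {x v : ℕ × ℕ × ℕ × ℕ} (hx : x ∈ Dom d₁ d₂ d₃ d)
    (hv : v ∈ Dom 0 0 0 0) : x + v ∈ Dom d₁ d₂ d₃ d := by
  obtain ⟨a, b, c, k⟩ := x
  obtain ⟨a', b', c', k'⟩ := v
  simp only [Dom, Set.mem_ofPred_eq, Prod.mk_add_mk] at hx hv ⊢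
  push_cast
  omega

lemma le_of_mem_Dom {d₁ d₂ d₃ d : ℤ} {a b c k : ℕ} (h : (a, b, c, k) ∈ Dom d₁ d₂ d₃ d) :
    a ≤ k ∧ b ≤ k ∧ c ≤ k :=
  h.2.2.2.2

lemma AddSubmonoid.apply_add_eq_of_mem_closure {M β : Type*} [AddMonoid M] {D S : Set M}
    {F : M → β} (hD : ∀ x ∈ D, ∀ v ∈ S, x + v ∈ D) (hF : ∀ x ∈ D, ∀ v ∈ S, F (x + v) = F x)
    {w : M} (hw : w ∈ AddSubmonoid.closure S) {x : M} (hx : x ∈ D) :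
    x + w ∈ D ∧ F (x + w) = F x := by
  induction hw using AddSubmonoid.closure_induction generalizing x with
  | mem v hv => exact ⟨hD x hx v hv, hF x hx v hv⟩
  | zero => simpa using hx
  | add u v _ _ hu hv =>
    obtain ⟨hxu, hFu⟩ := hu hx
    obtain ⟨hxuv, hFuv⟩ := hv hxu
    rw [← add_assoc]
    exact ⟨hxuv, hFuv.trans hFu⟩

def domMoves : Set (ℕ × ℕ × ℕ × ℕ) := {(0, 0, 0, 1), (1, 1, 0, 1), (1, 0, 1, 1), (0, 1, 1, 1)}

lemma domMoves_subset_Dom : domMoves ⊆ Dom 0 0 0 0 := by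
  rintro v (rfl | rfl | rfl | rfl) <;> simp [Dom]

lemma exists_mem_closure_domMoves_add_eq (a b c k N : ℕ) (hpar : N % 2 = (a + b + c) % 2)
    (hN : a + b + c + 2 * k ≤ N) :
    ∃ w ∈ AddSubmonoid.closure domMoves, (a, b, c, k) + w = (N, N, N, 2 * N) := by
  have hmem : ∀ v ∈ domMoves, ∀ j : ℕ, j • v ∈ AddSubmonoid.closure domMoves :=
    fun v hv j => nsmul_mem (AddSubmonoid.subset_closure hv) j
  let k₁ := (N + c - a - b) / 2
  let k₂ := (N + b - a - c) / 2
  let k₃ := (N + a - b - c) / 2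
  refine ⟨(2 * N - k - k₁ - k₂ - k₃) • (0, 0, 0, 1) + k₁ • (1, 1, 0, 1) + k₂ • (1, 0, 1, 1) +
    k₃ • (0, 1, 1, 1), ?_, ?_⟩
  · refine add_mem (add_mem (add_mem ?_ ?_) ?_) ?_ <;> apply hmem <;> simp [domMoves]
  · simp only [Prod.smul_mk, Prod.mk_add_mk, smul_eq_mul, Prod.mk.injEq]
    omega

lemma eq_of_mem_Dom_of_mod_two_eq {β : Type*} {d₁ d₂ d₃ d : ℤ} {F : ℕ × ℕ × ℕ × ℕ → β}
    (hF : ∀ x ∈ Dom d₁ d₂ d₃ d, ∀ v ∈ domMoves, F (x + v) = F x) {a b c k a' b' c' k' : ℕ}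
    (hx : (a, b, c, k) ∈ Dom d₁ d₂ d₃ d) (hy : (a', b', c', k') ∈ Dom d₁ d₂ d₃ d)
    (h : (a + b + c) % 2 = (a' + b' + c') % 2) : F (a, b, c, k) = F (a', b', c', k') := by
  have hD : ∀ x ∈ Dom d₁ d₂ d₃ d, ∀ v ∈ domMoves, x + v ∈ Dom d₁ d₂ d₃ d :=
    fun x hx v hv => add_mem_Dom hx (domMoves_subset_Dom hv)
  set N := a + b + c + 2 * (a + b + c + k + a' + b' + c' + k')
  obtain ⟨w, hw, hxw⟩ := exists_mem_closure_domMoves_add_eq a b c k N (by omega) (by omega)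
  obtain ⟨w', hw', hyw'⟩ := exists_mem_closure_domMoves_add_eq a' b' c' k' N (by omega) (by omega)
  rw [← (AddSubmonoid.apply_add_eq_of_mem_closure hD hF hw hx).2,
    ← (AddSubmonoid.apply_add_eq_of_mem_closure hD hF hw' hy).2, hxw, hyw']

theorem eq_of_mem_Dom {β : Type*} [PartialOrder β] {d₁ d₂ d₃ d : ℤ} {F : ℕ × ℕ × ℕ × ℕ → β}
    (h₀ : ∀ a b c k, (a, b, c, k) ∈ Dom d₁ d₂ d₃ d → F (a, b, c, k + 1) = F (a, b, c, k))
    (h₁₂ : ∀ a b c k, (a, b, c, k) ∈ Dom d₁ d₂ d₃ d →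
      F (a + 1, b + 1, c, k + 1) = F (a, b, c, k))
    (h₁₃ : ∀ a b c k, (a, b, c, k) ∈ Dom d₁ d₂ d₃ d →
      F (a + 1, b, c + 1, k + 1) = F (a, b, c, k))
    (h₂₃ : ∀ a b c k, (a, b, c, k) ∈ Dom d₁ d₂ d₃ d →
      F (a, b + 1, c + 1, k + 1) = F (a, b, c, k))
    (hmono : ∀ a b c k, (a, b, c, k) ∈ Dom d₁ d₂ d₃ d →
      F (a, b, c, k) ≤ F (a + 1, b + 1, c + 1, k + 2))
    {x y : ℕ × ℕ × ℕ × ℕ} (hx : x ∈ Dom d₁ d₂ d₃ d) (hy : y ∈ Dom d₁ d₂ d₃ d) : F x = F y := by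
  have hF : ∀ x ∈ Dom d₁ d₂ d₃ d, ∀ v ∈ domMoves, F (x + v) = F x := by
    rintro ⟨a, b, c, k⟩ hx v (rfl | rfl | rfl | rfl) <;> simp only [Prod.mk_add_mk, add_zero]
    exacts [h₀ a b c k hx, h₁₂ a b c k hx, h₁₃ a b c k hx, h₂₃ a b c k hx]
  have hbox : ∀ a b c k, (a, b, c, k) ∈ Dom d₁ d₂ d₃ d →
      (a + 1, b + 1, c + 1, k + 2) ∈ Dom d₁ d₂ d₃ d :=
    fun a b c k hx => add_mem_Dom (v := (1, 1, 1, 2)) hx (by simp [Dom])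
  obtain ⟨a, b, c, k⟩ := x
  obtain ⟨a', b', c', k'⟩ := y
  by_cases h : (a + b + c) % 2 = (a' + b' + c') % 2
  · exact eq_of_mem_Dom_of_mod_two_eq hF hx hy h
  · exact le_antisymm
      ((hmono a b c k hx).trans_eq (eq_of_mem_Dom_of_mod_two_eq hF (hbox a b c k hx) hy
        (by omega)))
      ((hmono a' b' c' k' hy).trans_eq (eq_of_mem_Dom_of_mod_two_eq hF (hbox a' b' c' k' hy) hx
        (by omega)))

/-- If `K` is invariant under conjugating any two of its arguments, satisfies the
monotonicity `K(λ,μ,ν) ≤ K(λ⊕(1,1), μ⊕(1,1), ν⊕(1,1))` of Conjecture 5.10, and for every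
`(a,b,c,m) ∈ Dom d₁ d₂ d₃ d` the four triples `(A,B,C)`, `(A',B',C)`, `(A',B,C')`,
`(A,B',C')` with `A = λ⊕(m-a,a)`, `B = μ⊕(m-b,b)`, `C = ν⊕(m-c,c)` are `K`-stable, then
`(a,b,c,m) ↦ K(λ⊕(m-a,a), μ⊕(m-b,b), ν⊕(m-c,c))` is constant on `Dom d₁ d₂ d₃ d`. -/
theorem constant_on_Dom (K : List ℕ → List ℕ → List ℕ → ℕ)
    (hconj : ∀ l m n : List ℕ, IsPartition l → IsPartition m → IsPartition n →
      l.sum = m.sum → m.sum = n.sum →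
      K l m n = K (conjP l) (conjP m) n ∧
      K l m n = K (conjP l) m (conjP n) ∧
      K l m n = K l (conjP m) (conjP n))
    (hmono11 : ∀ l m n : List ℕ, IsPartition l → IsPartition m → IsPartition n →
      l.sum = m.sum → m.sum = n.sum →
      K l m n ≤ K (opPQ l 1 1) (opPQ m 1 1) (opPQ n 1 1))
    (l m n : List ℕ)
    (hl : IsPartition l) (hm : IsPartition m) (hn : IsPartition n)
    (hlne : l ≠ []) (hmne : m ≠ []) (hnne : n ≠ [])
    (hw₁ : l.sum = m.sum) (hw₂ : m.sum = n.sum)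
    (d₁ d₂ d₃ d : ℤ)
    (hstab : ∀ x ∈ Dom d₁ d₂ d₃ d,
      KStable K (opPQ l (x.2.2.2 - x.1) x.1) (opPQ m (x.2.2.2 - x.2.1) x.2.1)
        (opPQ n (x.2.2.2 - x.2.2.1) x.2.2.1) ∧
      KStable K (conjP (opPQ l (x.2.2.2 - x.1) x.1)) (conjP (opPQ m (x.2.2.2 - x.2.1) x.2.1))
        (opPQ n (x.2.2.2 - x.2.2.1) x.2.2.1) ∧
      KStable K (conjP (opPQ l (x.2.2.2 - x.1) x.1)) (opPQ m (x.2.2.2 - x.2.1) x.2.1)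
        (conjP (opPQ n (x.2.2.2 - x.2.2.1) x.2.2.1)) ∧
      KStable K (opPQ l (x.2.2.2 - x.1) x.1) (conjP (opPQ m (x.2.2.2 - x.2.1) x.2.1))
        (conjP (opPQ n (x.2.2.2 - x.2.2.1) x.2.2.1)))
    (x y : ℕ × ℕ × ℕ × ℕ) (hx : x ∈ Dom d₁ d₂ d₃ d) (hy : y ∈ Dom d₁ d₂ d₃ d) :
    K (opPQ l (x.2.2.2 - x.1) x.1) (opPQ m (x.2.2.2 - x.2.1) x.2.1)
        (opPQ n (x.2.2.2 - x.2.2.1) x.2.2.1) =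
      K (opPQ l (y.2.2.2 - y.1) y.1) (opPQ m (y.2.2.2 - y.2.1) y.2.1)
        (opPQ n (y.2.2.2 - y.2.2.1) y.2.2.1) := by
  refine eq_of_mem_Dom (F := hookK K l m n) ?_ ?_ ?_ ?_ ?_ hx hy <;>
    intro a b c k h <;> obtain ⟨ha, hb, hc⟩ := le_of_mem_Dom h
  · exact hookK_succ ha hb hc (hstab _ h).1
  · exact hookK_conj_succ (fun X Y Z hX hY hZ h₁ h₂ => (hconj X Y Z hX hY hZ h₁ h₂).1)
      hl hm hn hlne hmne hnne hw₁ hw₂ ha hb hc (hstab _ h).2.1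
  -- the other two conjugation moves are the first one for `K` with its arguments permuted
  · exact hookK_conj_succ (K := fun X Y Z => K X Z Y)
      (fun X Y Z hX hY hZ h₁ h₂ => (hconj X Z Y hX hZ hY (h₁.trans h₂) h₂.symm).2.1)
      hl hn hm hlne hnne hmne (hw₁.trans hw₂) hw₂.symm ha hc hb (hstab _ h).2.2.1
  · exact hookK_conj_succ (K := fun X Y Z => K Z X Y)
      (fun X Y Z hX hY hZ h₁ h₂ => (hconj Z X Y hZ hX hY (h₁.trans h₂).symm h₁).2.2)
      hm hn hl hmne hnne hlne hw₂ (hw₁.trans hw₂).symm hb hc ha (hstab _ h).2.2.2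
  · exact hookK_le_hookK_box hmono11 hl hm hn hlne hmne hnne hw₁ hw₂ ha hb hc
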